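/- Let r ≥ 1 and let ω_1, …, ω_r be complex numbers with Re(ω_j) > 0 for all j. Then there exists a function F : ℂ → ℂ which is meromorphic on all of ℂ and satisfies F(s) = ∏_{n_1,…,n_r = 0}^∞ ζ(s + n_1ω_1 + ⋯ + n_rω_r) for every s with Re(s) > 1. -/

import Mathlib

/-!
For `Re z ≥ 2` one has `‖ζ(z) - 1‖ ≤ C · 2 ^ (2 - Re z)`, and `∑ₙ 2 ^ (-Re (n · ω))` converges
because it is a product of geometric series. Hence near any `s₀` all but finitely many factors
`ζ(s + n · ω)` are holomorphic and `1 + O(2 ^ (-Re (n · ω)))` uniformly in `s`, so their product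
converges locally uniformly to a holomorphic function, while the finitely many remaining factors
are meromorphic.
-/

open Complex Filter

lemma summable_pi_prod_of_nonneg {ι κ : Type*} [Fintype ι] {f : ι → κ → ℝ}
    (hf₀ : ∀ i k, 0 ≤ f i k) (hf : ∀ i, Summable (f i)) :
    Summable fun x : ι → κ ↦ ∏ i, f i (x i) := by
  classical
  refine summable_of_sum_le (c := ∏ i, ∑' k, f i k)
    (fun x ↦ Finset.prod_nonneg fun i _ ↦ hf₀ i _) fun S ↦ ?_
  let T : ι → Finset κ := fun i ↦ S.image (· i)
  calc ∑ x ∈ S, ∏ i, f i (x i)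
      ≤ ∑ x ∈ Fintype.piFinset T, ∏ i, f i (x i) :=
        Finset.sum_le_sum_of_subset_of_nonneg
          (fun x hx ↦ Fintype.mem_piFinset.mpr fun i ↦ Finset.mem_image_of_mem _ hx)
          fun x _ _ ↦ Finset.prod_nonneg fun i _ ↦ hf₀ i _
    _ = ∏ i, ∑ k ∈ T i, f i k := (Finset.prod_univ_sum T f).symm
    _ ≤ ∏ i, ∑' k, f i k :=
        Finset.prod_le_prod (fun i _ ↦ Finset.sum_nonneg fun k _ ↦ hf₀ i k)
          fun i _ ↦ (hf i).sum_le_tsum _ fun k _ ↦ hf₀ i k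

lemma summable_two_rpow_neg_re_sum {ι : Type*} [Fintype ι] {ω : ι → ℂ}
    (hω : ∀ j, 0 < (ω j).re) :
    Summable fun n : ι → ℕ ↦ (2 : ℝ) ^ (-(∑ j, (n j : ℂ) * ω j).re) := by
  have hgeom : ∀ j, Summable fun k : ℕ ↦ ((2 : ℝ) ^ (-(ω j).re)) ^ k := fun j ↦
    summable_geometric_of_lt_one (by positivity)
      (Real.rpow_lt_one_of_one_lt_of_neg one_lt_two (neg_neg_of_pos (hω j)))
  refine (summable_pi_prod_of_nonneg (fun j k ↦ by positivity) hgeom).congr fun n ↦ ?_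
  rw [re_sum, ← Finset.sum_neg_distrib, Real.rpow_sum_of_pos two_pos]
  refine Finset.prod_congr rfl fun j _ ↦ ?_
  rw [← Real.rpow_mul_natCast two_pos.le, mul_re, natCast_re, natCast_im]
  ring_nf

lemma meromorphic_riemannZeta : Meromorphic riemannZeta := by
  have h : Function.update (fun s ↦ (s - 1)⁻¹ * riemannZeta₁ s) 1 (riemannZeta 1) =
      riemannZeta := by
    funext s
    rcases eq_or_ne s 1 with rfl | hs
    · exact Function.update_self ..
    · rw [Function.update_of_ne hs, riemannZeta_eq_inv_sub_mul hs]
  intro x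
  rw [← h]
  exact ((MeromorphicAt.id x).sub (.const 1 x)).inv.mul
    (differentiable_riemannZeta₁.analyticAt x).meromorphicAt |>.update _ _

lemma norm_riemannZeta_sub_one_le {z : ℂ} (hz : 2 ≤ z.re) :
    ‖riemannZeta z - 1‖ ≤ (∑' n : ℕ, ((n : ℝ) + 2) ^ (-2 : ℝ)) * 2 ^ (2 - z.re) := by
  have hsum : ∀ {σ : ℝ}, 1 < σ → Summable fun n : ℕ ↦ ((n : ℝ) + 2) ^ (-σ) := fun hσ ↦ by
    simpa using (summable_nat_add_iff 2).mpr (Real.summable_nat_rpow.mpr (neg_lt_neg hσ))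
  have hnorm (n : ℕ) : ‖1 / ((n : ℂ) + 2) ^ z‖ = ((n : ℝ) + 2) ^ (-z.re) := by
    have : ((n : ℂ) + 2) = ((n + 2 : ℕ) : ℂ) := by push_cast; ring
    rw [this, norm_div, norm_one, norm_natCast_cpow_of_pos (by omega),
      Real.rpow_neg (by positivity), one_div]
    push_cast
    rfl
  have hterm (n : ℕ) : ((n : ℝ) + 2) ^ (-z.re) ≤ ((n : ℝ) + 2) ^ (-2 : ℝ) * 2 ^ (2 - z.re) :=
    calc ((n : ℝ) + 2) ^ (-z.re)
        = ((n : ℝ) + 2) ^ (-2 : ℝ) * ((n : ℝ) + 2) ^ (2 - z.re) := by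
          rw [← Real.rpow_add (by positivity : (0 : ℝ) < n + 2)]
          ring_nf
      _ ≤ ((n : ℝ) + 2) ^ (-2 : ℝ) * 2 ^ (2 - z.re) := by
          refine mul_le_mul_of_nonneg_left ?_ (by positivity)
          exact Real.rpow_le_rpow_of_nonpos two_pos (le_add_of_nonneg_left n.cast_nonneg)
            (by linarith)
  have hz₁ : 1 < z.re := by linarith
  have hsumm : Summable fun n : ℕ ↦ 1 / ((n : ℂ) + 2) ^ z :=
    .of_norm (by simpa only [hnorm] using hsum hz₁)
  have htail : riemannZeta z - 1 = ∑' n : ℕ, 1 / ((n : ℂ) + 2) ^ z := by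
    rw [zeta_eq_tsum_one_div_nat_add_one_cpow hz₁,
      tsum_eq_zero_add' (by simpa [add_assoc, one_add_one_eq_two] using hsumm)]
    simp [add_assoc, one_add_one_eq_two]
  rw [htail, ← tsum_mul_right]
  refine (norm_tsum_le_tsum_norm hsumm.norm).trans ?_
  simp only [hnorm]
  exact (hsum hz₁).tsum_le_tsum hterm ((hsum one_lt_two).mul_right _)

section InfiniteProduct

variable {ι : Type*} {f : ι → ℂ → ℂ} {u : ι → ℝ} {U : Set ℂ}

lemma Summable.differentiableOn_tprod_one_add (hU : IsOpen U) (hu : Summable u)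
    (hfu : ∀ᶠ i in cofinite, ∀ x ∈ U, ‖f i x‖ ≤ u i) (hf : ∀ i, DifferentiableOn ℂ (f i) U) :
    DifferentiableOn ℂ (fun x ↦ ∏' i, (1 + f i x)) U :=
  (hu.hasProdLocallyUniformlyOn_one_add hU hfu fun i ↦ (hf i).continuousOn).differentiableOn
    (.of_forall fun _ ↦ .fun_finsetProd fun i _ ↦ (hf i).const_add 1) hU

lemma Summable.meromorphicOn_tprod (hU : IsOpen U) (hu : Summable u)
    (hf : ∀ i, MeromorphicOn (f i) U)
    (hfu : ∀ᶠ i in cofinite, DifferentiableOn ℂ (f i) U ∧ ∀ x ∈ U, ‖f i x - 1‖ ≤ u i) :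
    MeromorphicOn (fun x ↦ ∏' i, f i x) U := by
  classical
  obtain ⟨A, hA⟩ : ∃ A : Finset ι, ∀ i ∉ A,
      DifferentiableOn ℂ (f i) U ∧ ∀ x ∈ U, ‖f i x - 1‖ ≤ u i :=
    ⟨(eventually_cofinite.mp hfu).toFinset, fun i hi ↦ by simpa using hi⟩
  let g i x := if i ∈ A then 0 else f i x - 1
  have hg_le : ∀ i, ∀ x ∈ U, ‖g i x‖ ≤ |u i| := fun i x hx ↦ by
    by_cases hi : i ∈ A
    · simp [g, hi]
    · simpa [g, hi] using ((hA i hi).2 x hx).trans (le_abs_self _)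
  have hg : ∀ i, DifferentiableOn ℂ (g i) U := fun i ↦ by
    by_cases hi : i ∈ A
    · simp [g, hi, differentiableOn_const]
    · simpa [g, hi] using (hA i hi).1.sub_const 1
  have hsplit : Set.EqOn (fun x ↦ (∏ i ∈ A, f i x) * ∏' i, (1 + g i x))
      (fun x ↦ ∏' i, f i x) U := by
    intro x hx
    dsimp only
    have hfac : ∀ i, f i x = (if i ∈ A then f i x else 1) * (1 + g i x) := fun i ↦ by
      by_cases hi : i ∈ A <;> simp [g, hi]
    rw [tprod_congr hfac,
      Multipliable.tprod_mul (multipliable_of_ne_finset_one fun i hi ↦ if_neg hi)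
        (Complex.multipliable_one_add_of_summable (.of_norm_bounded hu.abs (hg_le · x hx))),
      tprod_eq_prod fun i hi ↦ if_neg hi, Finset.prod_ite_mem, Finset.inter_self]
  have htail := hu.abs.differentiableOn_tprod_one_add hU (.of_forall hg_le) hg
  exact ((MeromorphicOn.fun_prod fun i _ ↦ hf i).mul (htail.analyticOnNhd hU).meromorphicOn).congr
    hsplit hU

lemma Summable.meromorphic_tprod_riemannZeta_add {a : ι → ℂ}
    (ha : Summable fun i ↦ (2 : ℝ) ^ (-(a i).re)) :
    Meromorphic fun s ↦ ∏' i, riemannZeta (s + a i) := by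
  intro s₀
  set C := ∑' n : ℕ, ((n : ℝ) + 2) ^ (-2 : ℝ)
  set U := {s : ℂ | s₀.re - 1 < s.re}
  have hfar : ∀ᶠ i in cofinite, 3 - s₀.re < (a i).re := by
    filter_upwards [ha.tendsto_cofinite_zero.eventually (gt_mem_nhds (by positivity :
      (0 : ℝ) < 2 ^ (-(3 - s₀.re))))] with i hi
    linarith [(Real.rpow_lt_rpow_left_iff one_lt_two).mp hi]
  refine (ha.mul_left (C * 2 ^ (3 - s₀.re))).meromorphicOn_tprod
    (isOpen_lt continuous_const continuous_re : IsOpen U) (fun i x _ ↦ ?_) ?_ s₀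
    (show s₀.re - 1 < s₀.re by linarith)
  · exact meromorphicAt_comp_add_const_iff_meromorphicAt.mpr (meromorphic_riemannZeta _)
  filter_upwards [hfar] with i hi
  have hre : ∀ s ∈ U, 2 < (s + a i).re := fun s (hs : s₀.re - 1 < s.re) ↦ by
    rw [add_re]; linarith
  refine ⟨fun s hs ↦ ?_, fun s (hs : s₀.re - 1 < s.re) ↦ ?_⟩
  · have hne : s + a i ≠ 1 := fun h ↦ by simpa [h] using hre s hs
    exact ((differentiableAt_riemannZeta hne).comp s
      (differentiableAt_id.add_const _)).differentiableWithinAt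
  · refine (norm_riemannZeta_sub_one_le (hre s hs).le).trans ?_
    have hC : 0 ≤ C := tsum_nonneg fun n ↦ by positivity
    rw [mul_assoc, add_re, show 2 - (s.re + (a i).re) = (2 - s.re) + -(a i).re by ring,
      Real.rpow_add two_pos]
    exact mul_le_mul_of_nonneg_left (mul_le_mul_of_nonneg_right
      (Real.rpow_le_rpow_of_exponent_le one_le_two (by linarith)) (by positivity)) hC

end InfiniteProduct

theorem higherRiemannZeta_lattice_meromorphic_continuation_general (r : ℕ)
    (ω : Fin r → ℂ) (hω : ∀ j, 0 < (ω j).re) :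
    ∃ F : ℂ → ℂ, MeromorphicOn F Set.univ ∧
      ∀ s : ℂ, 1 < s.re →
        F s = ∏' n : Fin r → ℕ, riemannZeta (s + ∑ j, (n j : ℂ) * ω j) :=
  ⟨fun s ↦ ∏' n : Fin r → ℕ, riemannZeta (s + ∑ j, (n j : ℂ) * ω j),
    fun s _ ↦ (summable_two_rpow_neg_re_sum hω).meromorphic_tprod_riemannZeta_add s,
    fun _ _ ↦ rfl⟩

/-- The higher Riemann zeta function of weight `ω` extends to a function meromorphic on
all of `ℂ`. -/
theorem higherRiemannZeta_lattice_meromorphic_continuation (r : ℕ) (hr : 1 ≤ r)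
    (ω : Fin r → ℂ) (hω : ∀ j, 0 < (ω j).re) :
    ∃ F : ℂ → ℂ, MeromorphicOn F Set.univ ∧
      ∀ s : ℂ, 1 < s.re →
        F s = ∏' n : Fin r → ℕ, riemannZeta (s + ∑ j, (n j : ℂ) * ω j) :=
  higherRiemannZeta_lattice_meromorphic_continuation_general r ω hω
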